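/- arXiv:1208.3759 — 3 statements merged into one kernel-verified Lean document; each statement's English description precedes it below -/
import Mathlib

section
/- Let A be an expanding 2×2 matrix with characteristic polynomial x² + 2x + 3 and v with {v, Av} linearly independent, and set 𝒟 = {0, v, kAv} with |k| ≥ 3. Then the self-affine set T(A,𝒟) is disconnected. -/
/-!
Let `φ` be the linear functional with `φ v = 0` and `φ (A v) = 1`. Since `A⁻¹` is a root of
`3x² + 2x + 1`, the numbers `βₙ = φ (A⁻ⁿ v)` satisfy `3βₙ₊₂ + 2βₙ₊₁ + βₙ = 0`, and a numerical
estimate gives `∑ |βₙ| < 3/4`. A point of `T` is `∑ A⁻⁽ⁿ⁺¹⁾ dₙ` with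
`φ (A⁻⁽ⁿ⁺¹⁾ d) ∈ {0, βₙ₊₁, k βₙ}` for `d ∈ 𝒟`, so `φ(T)` has diameter at most
`(1 + |k|) ∑ |βₙ| < |k|` once `|k| ≥ 3`.

On the other hand `A T ⊆ T + 𝒟` and `φ(𝒟) = {0, k}`, so `φ(A T)` lies in the union of `φ(T)` and
its translate by `k`, two sets at positive distance, and it meets both: at `φ (A 0) = 0` and at
`φ (A (A⁻¹ (k A v))) = k`. So the continuous image `φ(A T)` of `T` is disconnected.
-/

open Matrix Polynomial

/-- All (complex) eigenvalues of `A` have modulus strictly larger than `1`. -/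
def IsExpandingMat (A : Matrix (Fin 2) (Fin 2) ℝ) : Prop :=
  ∀ μ ∈ spectrum ℂ (A.map (algebraMap ℝ ℂ)), 1 < ‖μ‖

/-- The self-affine set `T(A, D) = {∑_{i≥1} A^{-i} d_i : d_i ∈ D}`. -/
noncomputable def selfAffine (A : Matrix (Fin 2) (Fin 2) ℝ) (D : Set (Fin 2 → ℝ)) :
    Set (Fin 2 → ℝ) :=
  { x | ∃ d : ℕ → (Fin 2 → ℝ), (∀ n, d n ∈ D) ∧
      HasSum (fun n => (A⁻¹ ^ (n + 1)) *ᵥ d n) x }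

open Pointwise

theorem abs_sub_le_of_mem_triple {a b p q : ℝ} (ha : a ∈ ({0, p, q} : Set ℝ))
    (hb : b ∈ ({0, p, q} : Set ℝ)) : |a - b| ≤ |p| + |q| := by
  simp only [Set.mem_insert_iff, Set.mem_singleton_iff] at ha hb
  rcases ha with ha | ha | ha <;> rcases hb with hb | hb | hb <;> rw [ha, hb] <;>
    refine abs_sub_le_iff.2 ⟨?_, ?_⟩ <;>
    linarith [le_abs_self p, neg_abs_le p, le_abs_self q, neg_abs_le q]

theorem abs_sub_le_tsum_of_hasSum {f g b : ℕ → ℝ} {x y : ℝ} (hf : HasSum f x) (hg : HasSum g y)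
    (hb : Summable b) (hfg : ∀ n, |f n - g n| ≤ b n) : |x - y| ≤ ∑' n, b n := by
  have hsub := hf.sub hg
  refine abs_le.2 ⟨?_, ?_⟩
  · rw [← tsum_neg]
    exact hasSum_le (fun n => neg_le_of_abs_le (hfg n)) hb.neg.hasSum hsub
  · exact hasSum_le (fun n => le_of_abs_le (hfg n)) hsub hb.hasSum

theorem IsPreconnected.subset_of_subset_union_vadd {E : Type*} [SeminormedAddCommGroup E]
    {P S : Set E} {K : E} {M : ℝ} (hP : IsPreconnected P)
    (hS : ∀ a ∈ S, ∀ b ∈ S, ‖a - b‖ ≤ M) (hMK : M < ‖K‖)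
    (hPS : P ⊆ S ∪ (K +ᵥ S)) (hmeet : (P ∩ S).Nonempty) : P ⊆ S := by
  obtain ⟨δ, hδ, hδK⟩ : ∃ δ, 0 < δ ∧ 2 * δ + M ≤ ‖K‖ :=
    ⟨(‖K‖ - M) / 2, by linarith, by linarith⟩
  have hdisj : Disjoint (Metric.thickening δ S) (Metric.thickening δ (K +ᵥ S)) := by
    refine Set.disjoint_left.2 fun x hx hx' => ?_
    obtain ⟨a, ha, hxa⟩ := Metric.mem_thickening_iff.1 hx
    obtain ⟨_, ⟨b, hb, rfl⟩, hxb⟩ := Metric.mem_thickening_iff.1 hx'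
    rw [dist_eq_norm] at hxa hxb
    simp only [vadd_eq_add] at hxb
    have : ‖K‖ ≤ ‖x - a‖ + ‖x - (K + b)‖ + ‖a - b‖ :=
      calc ‖K‖ = ‖(x - a) - (x - (K + b)) + (a - b)‖ := by congr 1; abel
        _ ≤ _ := (norm_add_le _ _).trans (by gcongr; exact norm_sub_le _ _)
    linarith [hS a ha b hb]
  have hPU := hP.subset_left_of_subset_union Metric.isOpen_thickening Metric.isOpen_thickening
    hdisj (hPS.trans (Set.union_subset_union (Metric.self_subset_thickening hδ _)
      (Metric.self_subset_thickening hδ _)))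
    (hmeet.mono (Set.inter_subset_inter_right _ (Metric.self_subset_thickening hδ _)))
  intro p hp
  refine (hPS hp).resolve_right fun hpK => hdisj.ne_of_mem (hPU hp) ?_ rfl
  exact Metric.self_subset_thickening hδ _ hpK

namespace RecurrenceSeq

variable {β : ℕ → ℝ} (hrec : ∀ n, 3 * β (n + 2) + 2 * β (n + 1) + β n = 0)
  (h0 : β 0 = 0) (h1 : β 1 = -1 / 3)
include hrec h0 h1

/-- The quadratic form `x² + 2xy + 3y²` shrinks by the factor `1/3` along the recurrence:
the roots of `3x² + 2x + 1` have modulus `1/√3`. -/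
theorem energy_eq (n : ℕ) :
    β n ^ 2 + 2 * β n * β (n + 1) + 3 * β (n + 1) ^ 2 = (1 / 3) ^ (n + 1) := by
  induction n with
  | zero => rw [h0, h1]; norm_num
  | succ n ih =>
    rw [pow_succ]
    linear_combination (1 / 3 : ℝ) * ih + (β (n + 2) - β n / 3) * hrec n

-- `βₙ² ≤ (3/2)·(1/3)ⁿ⁺¹`, and `0.71 > 1/√2`, `0.58 > 1/√3`.
theorem abs_le_geometric (n : ℕ) : |β n| ≤ 0.71 * 0.58 ^ n := by
  have hsq : β n ^ 2 ≤ (0.71 * 0.58 ^ n) ^ 2 := by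
    have hpow : ((1 : ℝ) / 3) ^ n ≤ 0.3364 ^ n := by gcongr; norm_num
    have := energy_eq hrec h0 h1 n
    rw [pow_succ (1 / 3 : ℝ) n] at this
    rw [mul_pow, ← pow_mul, mul_comm n, pow_mul]
    norm_num at hpow ⊢
    nlinarith [sq_nonneg (β n + 3 * β (n + 1))]
  exact abs_le_of_sq_le_sq hsq (by positivity)

theorem summable_abs : Summable fun n => |β n| :=
  .of_nonneg_of_le (fun _ => abs_nonneg _) (abs_le_geometric hrec h0 h1)
    ((summable_geometric_of_lt_one (by norm_num) (by norm_num)).mul_left _)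

-- `511/729 + 0.71 · 0.58⁷ / 0.42 < 0.739`.
theorem tsum_abs_lt : ∑' n, |β n| < 3 / 4 := by
  have hs := summable_abs hrec h0 h1
  have hb : ∀ n, β (n + 2) = -(2 * β (n + 1) + β n) / 3 := fun n => by linarith [hrec n]
  have h2 : β 2 = 2 / 9 := by rw [hb, h1, h0]; norm_num
  have h3 : β 3 = -1 / 27 := by rw [hb, h2, h1]; norm_num
  have h4 : β 4 = -4 / 81 := by rw [hb, h3, h2]; norm_num
  have h5 : β 5 = 11 / 243 := by rw [hb, h4, h3]; norm_num
  have h6 : β 6 = -10 / 729 := by rw [hb, h5, h4]; norm_num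
  have head : ∑ n ∈ Finset.range 7, |β n| = 511 / 729 := by
    simp only [Finset.sum_range_succ, Finset.sum_range_zero, h0, h1, h2, h3, h4, h5, h6]
    norm_num [abs_div]
  have tail : ∑' n, |β (n + 7)| ≤ ∑' n, 0.71 * 0.58 ^ 7 * 0.58 ^ n := by
    refine (summable_nat_add_iff 7).2 hs |>.tsum_le_tsum (fun n => ?_)
      ((summable_geometric_of_lt_one (by norm_num) (by norm_num)).mul_left _)
    rw [mul_assoc, ← pow_add, add_comm 7]
    exact abs_le_geometric hrec h0 h1 _
  rw [tsum_mul_left, tsum_geometric_of_lt_one (by norm_num) (by norm_num)] at tail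
  rw [← hs.sum_add_tsum_nat_add 7, head]
  norm_num at tail ⊢
  linarith

end RecurrenceSeq

namespace Matrix

variable {R : Type*} [CommRing R] {A : Matrix (Fin 2) (Fin 2) R} {p q : R}

theorem det_eq_of_charpoly_eq (h : A.charpoly = X ^ 2 + C p * X + C q) : A.det = q := by
  rw [det_eq_sign_charpoly_coeff, h]
  simp

theorem mulVec_mulVec_add_of_charpoly_eq (h : A.charpoly = X ^ 2 + C p * X + C q)
    (w : Fin 2 → R) : A *ᵥ (A *ᵥ w) + p • (A *ᵥ w) + q • w = 0 := by
  have hCH := congrArg (· *ᵥ w) (aeval_self_charpoly A)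
  simp only [h, map_add, map_mul, aeval_X, aeval_C, Algebra.algebraMap_eq_smul_one,
    add_mulVec, smul_mulVec, one_mulVec, sq, ← mulVec_mulVec, zero_mulVec, smul_mul, one_mul] at hCH
  exact hCH

theorem mulVec_inv_pow_succ_mulVec (hA : IsUnit A.det) (u : Fin 2 → R) (n : ℕ) :
    A *ᵥ (A⁻¹ ^ (n + 1) *ᵥ u) = A⁻¹ ^ n *ᵥ u := by
  rw [mulVec_mulVec, pow_succ', ← mul_assoc, mul_nonsing_inv A hA, one_mul]

theorem inv_pow_succ_mulVec_mulVec (hA : IsUnit A.det) (u : Fin 2 → R) (n : ℕ) :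
    A⁻¹ ^ (n + 1) *ᵥ (A *ᵥ u) = A⁻¹ ^ n *ᵥ u := by
  rw [mulVec_mulVec, pow_succ, mul_assoc, nonsing_inv_mul A hA, mul_one]

theorem inv_pow_mulVec_add_of_charpoly_eq (h : A.charpoly = X ^ 2 + C p * X + C q)
    (hA : IsUnit A.det) (u : Fin 2 → R) (n : ℕ) :
    A⁻¹ ^ n *ᵥ u + p • (A⁻¹ ^ (n + 1) *ᵥ u) + q • (A⁻¹ ^ (n + 2) *ᵥ u) = 0 := by
  simpa only [mulVec_inv_pow_succ_mulVec hA] using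
    mulVec_mulVec_add_of_charpoly_eq h (A⁻¹ ^ (n + 2) *ᵥ u)

end Matrix

theorem exists_continuousLinearMap_eq_zero_eq_one {v w : Fin 2 → ℝ}
    (hvw : LinearIndependent ℝ ![v, w]) : ∃ φ : (Fin 2 → ℝ) →L[ℝ] ℝ, φ v = 0 ∧ φ w = 1 := by
  let b := basisOfLinearIndependentOfCardEqFinrank hvw (by simp)
  have hb : ⇑b = ![v, w] := coe_basisOfLinearIndependentOfCardEqFinrank hvw _
  have hv : b 0 = v := congrFun hb 0
  have hw : b 1 = w := congrFun hb 1
  refine ⟨LinearMap.toContinuousLinearMap (b.coord 1), ?_, ?_⟩ <;> simp [← hv, ← hw]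

section SelfAffine

variable {A : Matrix (Fin 2) (Fin 2) ℝ} {D : Set (Fin 2 → ℝ)}

theorem zero_mem_selfAffine (h0 : 0 ∈ D) : 0 ∈ selfAffine A D :=
  ⟨fun _ => 0, fun _ => h0, by simpa only [mulVec_zero] using hasSum_zero⟩

theorem inv_mulVec_mem_selfAffine (h0 : 0 ∈ D) {d : Fin 2 → ℝ} (hd : d ∈ D) :
    A⁻¹ *ᵥ d ∈ selfAffine A D := by
  refine ⟨fun n => if n = 0 then d else 0, fun n => by dsimp only; split_ifs <;> assumption, ?_⟩
  convert hasSum_ite_eq 0 (A⁻¹ *ᵥ d) using 2 with n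
  split_ifs with hn <;> simp [hn]

theorem mulVec_mem_selfAffine_add (hA : IsUnit A.det) {x : Fin 2 → ℝ} (hx : x ∈ selfAffine A D) :
    A *ᵥ x ∈ selfAffine A D + D := by
  obtain ⟨d, hd, hsum⟩ := hx
  have htail : HasSum (fun n => A⁻¹ ^ (n + 1 + 1) *ᵥ d (n + 1)) (x - A⁻¹ *ᵥ d 0) := by
    rw [← hasSum_nat_add_iff' 1] at hsum
    simpa using hsum
  have hshift := (Matrix.mulVecLin A).toContinuousLinearMap.hasSum htail
  simp only [LinearMap.coe_toContinuousLinearMap', mulVecLin_apply,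
    mulVec_inv_pow_succ_mulVec hA, mulVec_sub, mulVec_mulVec, mul_nonsing_inv A hA,
    one_mulVec] at hshift
  exact ⟨_, ⟨fun n => d (n + 1), fun n => hd _, hshift⟩, d 0, hd 0, sub_add_cancel _ _⟩

theorem abs_sub_le_of_mem_selfAffine (φ : (Fin 2 → ℝ) →L[ℝ] ℝ) {b : ℕ → ℝ} (hb : Summable b)
    (hbD : ∀ n, ∀ d ∈ D, ∀ e ∈ D, |φ (A⁻¹ ^ (n + 1) *ᵥ d) - φ (A⁻¹ ^ (n + 1) *ᵥ e)| ≤ b n)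
    {x y : Fin 2 → ℝ} (hx : x ∈ selfAffine A D) (hy : y ∈ selfAffine A D) :
    |φ x - φ y| ≤ ∑' n, b n := by
  obtain ⟨d, hd, hdx⟩ := hx
  obtain ⟨e, he, hey⟩ := hy
  exact abs_sub_le_tsum_of_hasSum (φ.hasSum hdx) (φ.hasSum hey) hb fun n => hbD n _ (hd n) _ (he n)

theorem not_isPreconnected_selfAffine (hA : IsUnit A.det) (φ : (Fin 2 → ℝ) →L[ℝ] ℝ)
    {d : Fin 2 → ℝ} {M : ℝ} (h0 : 0 ∈ D) (hd : d ∈ D) (hφD : ∀ e ∈ D, φ e = 0 ∨ φ e = φ d)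
    (hdiam : ∀ x ∈ selfAffine A D, ∀ y ∈ selfAffine A D, |φ x - φ y| ≤ M) (hM : M < |φ d|) :
    ¬ IsPreconnected (selfAffine A D) := by
  intro hT
  have hS : ∀ a ∈ φ '' selfAffine A D, ∀ b ∈ φ '' selfAffine A D, ‖a - b‖ ≤ M := by
    rintro _ ⟨x, hx, rfl⟩ _ ⟨y, hy, rfl⟩
    exact hdiam x hx y hy
  have hAT : (fun x => φ (A *ᵥ x)) '' selfAffine A D ⊆
      φ '' selfAffine A D ∪ (φ d +ᵥ φ '' selfAffine A D) := by
    rintro _ ⟨x, hx, rfl⟩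
    obtain ⟨y, hy, e, he, hxy⟩ := Set.mem_add.1 (mulVec_mem_selfAffine_add hA hx)
    show φ (A *ᵥ x) ∈ _
    rw [← hxy, map_add]
    rcases hφD e he with h | h
    · exact .inl ⟨y, hy, by rw [h, add_zero]⟩
    · exact .inr ⟨φ y, ⟨y, hy, rfl⟩, by rw [h]; exact add_comm _ _⟩
  have h0T := zero_mem_selfAffine (A := A) h0
  have hsub := (hT.image _ (by fun_prop : Continuous fun x => φ (A *ᵥ x)).continuousOn)
    |>.subset_of_subset_union_vadd hS hM hAT ⟨0, ⟨0, h0T, by simp⟩, 0, h0T, by simp⟩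
  obtain ⟨z, hz, hφz⟩ := hsub ⟨A⁻¹ *ᵥ d, inv_mulVec_mem_selfAffine h0 hd,
    show φ (A *ᵥ (A⁻¹ *ᵥ d)) = φ d by rw [mulVec_mulVec, mul_nonsing_inv A hA, one_mulVec]⟩
  have := hdiam z hz 0 h0T
  rw [map_zero, sub_zero, hφz] at this
  linarith

end SelfAffine

section Coordinate

variable {A : Matrix (Fin 2) (Fin 2) ℝ} {φ : (Fin 2 → ℝ) →L[ℝ] ℝ} {v : Fin 2 → ℝ}

theorem summable_abs_coord_inv_pow_and_tsum_lt (hchar : A.charpoly = X ^ 2 + C (2 : ℝ) * X + C 3)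
    (hφv : φ v = 0) (hφAv : φ (A *ᵥ v) = 1) :
    Summable (fun n => |φ (A⁻¹ ^ n *ᵥ v)|) ∧ ∑' n, |φ (A⁻¹ ^ n *ᵥ v)| < 3 / 4 := by
  have hA : IsUnit A.det := by rw [det_eq_of_charpoly_eq hchar]; norm_num
  have hrec (n : ℕ) :
      3 * φ (A⁻¹ ^ (n + 2) *ᵥ v) + 2 * φ (A⁻¹ ^ (n + 1) *ᵥ v) + φ (A⁻¹ ^ n *ᵥ v) = 0 := by
    have := congrArg φ (inv_pow_mulVec_add_of_charpoly_eq hchar hA v n)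
    simp only [map_add, map_smul, smul_eq_mul, map_zero] at this
    linarith
  have h0 : φ (A⁻¹ ^ 0 *ᵥ v) = 0 := by rw [pow_zero, one_mulVec, hφv]
  have h1 : φ (A⁻¹ ^ 1 *ᵥ v) = -1 / 3 := by
    have := congrArg φ (mulVec_mulVec_add_of_charpoly_eq hchar (A⁻¹ ^ (0 + 1) *ᵥ v))
    rw [mulVec_inv_pow_succ_mulVec hA, pow_zero, one_mulVec] at this
    simp only [map_add, map_smul, smul_eq_mul, map_zero, hφv, hφAv, zero_add] at this
    linarith
  exact ⟨RecurrenceSeq.summable_abs hrec h0 h1, RecurrenceSeq.tsum_abs_lt hrec h0 h1⟩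

theorem abs_sub_coord_le_of_mem_selfAffine (hA : IsUnit A.det) (hφv : φ v = 0)
    (hφAv : φ (A *ᵥ v) = 1) (hs : Summable fun n => |φ (A⁻¹ ^ n *ᵥ v)|) (K : ℝ)
    {x y : Fin 2 → ℝ} (hx : x ∈ selfAffine A {0, v, K • (A *ᵥ v)})
    (hy : y ∈ selfAffine A {0, v, K • (A *ᵥ v)}) :
    |φ x - φ y| ≤ (1 + |K|) * ∑' n, |φ (A⁻¹ ^ n *ᵥ v)| := by
  set β := fun n => φ (A⁻¹ ^ n *ᵥ v)
  have hdigit (n : ℕ) (d) (hd : d ∈ ({0, v, K • (A *ᵥ v)} : Set (Fin 2 → ℝ))) :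
      φ (A⁻¹ ^ (n + 1) *ᵥ d) ∈ ({0, β (n + 1), K * β n} : Set ℝ) := by
    rcases hd with rfl | rfl | rfl
    · exact .inl (by rw [mulVec_zero, map_zero])
    · exact .inr (.inl rfl)
    · refine .inr (.inr ?_)
      rw [mulVec_smul, inv_pow_succ_mulVec_mulVec hA, map_smul, smul_eq_mul]
      rfl
  have hb : Summable fun n => |β (n + 1)| + |K| * |β n| :=
    ((summable_nat_add_iff 1).2 hs).add (hs.mul_left _)
  refine (abs_sub_le_of_mem_selfAffine φ hb (fun n d hd e he => ?_) hx hy).trans_eq ?_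
  · simpa only [abs_mul] using abs_sub_le_of_mem_triple (hdigit n d hd) (hdigit n e he)
  · have hshift : ∑' n, |β (n + 1)| = ∑' n, |β n| := by
      rw [hs.tsum_eq_zero_add, pow_zero, one_mulVec, hφv, abs_zero, zero_add]
    rw [((summable_nat_add_iff 1).2 hs).tsum_add (hs.mul_left _), tsum_mul_left, hshift]
    ring

end Coordinate

theorem stmt13_general (A : Matrix (Fin 2) (Fin 2) ℝ)
    (hchar : A.charpoly = X ^ 2 + C (2 : ℝ) * X + C 3)
    (v : Fin 2 → ℝ) (hv : LinearIndependent ℝ ![v, A *ᵥ v])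
    (k : ℤ) (hk : 3 ≤ |k|)
    (D : Set (Fin 2 → ℝ)) (hD : D = {0, v, (k : ℝ) • (A *ᵥ v)}) :
    ¬ IsConnected (selfAffine A D) := by
  subst hD
  obtain ⟨φ, hφv, hφAv⟩ := exists_continuousLinearMap_eq_zero_eq_one hv
  have hA : IsUnit A.det := by rw [det_eq_of_charpoly_eq hchar]; norm_num
  obtain ⟨hs, hlt⟩ := summable_abs_coord_inv_pow_and_tsum_lt hchar hφv hφAv
  have hφk : φ ((k : ℝ) • (A *ᵥ v)) = k := by rw [map_smul, hφAv, smul_eq_mul, mul_one]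
  have hk' : (3 : ℝ) ≤ |(k : ℝ)| := by exact_mod_cast hk
  refine fun hT => not_isPreconnected_selfAffine hA φ (d := (k : ℝ) • (A *ᵥ v)) (by simp)
    (by simp) ?_ (fun x hx y hy => abs_sub_coord_le_of_mem_selfAffine hA hφv hφAv hs k hx hy) ?_
    hT.isPreconnected
  · rintro e (rfl | rfl | rfl) <;> simp [hφv]
  · rw [hφk]
    nlinarith [mul_lt_mul_of_pos_left hlt (by positivity : (0 : ℝ) < 1 + |(k : ℝ)|)]

theorem stmt13 (A : Matrix (Fin 2) (Fin 2) ℝ) (hexp : IsExpandingMat A)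
    (hchar : A.charpoly = X ^ 2 + C (2 : ℝ) * X + C 3)
    (v : Fin 2 → ℝ) (hv : LinearIndependent ℝ ![v, A *ᵥ v])
    (k : ℤ) (hk : 3 ≤ |k|)
    (D : Set (Fin 2 → ℝ)) (hD : D = {0, v, (k : ℝ) • (A *ᵥ v)}) :
    ¬ IsConnected (selfAffine A D) :=
  stmt13_general A hchar v hv k hk D hD
end

section
/- Let A be a 2×2 matrix with A² + 3A + 3I = 0 and v with {v, Av} linearly independent. Then I = −2A^{−1} − A^{−2} + A^{−3} − A^{−4} + A^{−5} − ⋯ (i.e. I = −2A^{−1} − A^{−2} + ∑_{i≥3}(−1)^{i+1}A^{−i}), and consequently for 𝒟 = {0, v, −Av} both v and Av + v lie in T(A,𝒟) − T(A,𝒟), so T(A,𝒟) is connected. -/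
/-! Let `B = A⁻¹`. From `A² + 3A + 3 = 0` one gets `3B² + 3B + 1 = 0`, i.e. `(1 + B)³ = B³`, and
`27B⁶ = -1`. The latter makes `∑ ‖Bⁿ‖` converge (the eigenvalues of `B` have modulus `1/√3`), so
`∑ (-B)ᵏ = (1 + B)⁻¹` and the tail `∑_{i≥3} (-1)^{i+1} Bⁱ = B³(1 + B)⁻¹ = (1 + B)² = 1 + 2B + B²`,
which is the expansion of `1`.

Applied to `v`, and using `B²(Av) = Bv`, the expansion writes `v = ∑ B^{i+1} eᵢ` with all digits
`eᵢ ∈ {-v, -(Av + v), ±v} ⊆ 𝒟 - 𝒟`, so `v ∈ T - T`; dropping the first digit gives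
`Av + v = A(v - B e₀) ∈ T - T`. Hence each piece `B(c + T)`, `c ∈ 𝒟`, meets `B(v + T)` (Hata's
criterion). By induction on `n`, any two points of `T` are then joined by a chain whose consecutive
points lie in a common translate of `Bⁿ T`; these have diameter `O(‖Bⁿ‖) → 0`, and a compact set
that is `ε`-chain connected for every `ε > 0` is connected. -/

open Matrix
open scoped Pointwise

open Filter Topology Relation

theorem summable_of_add_le_pow_mul {u : ℕ → ℝ} {m : ℕ} {r : ℝ} (hm : 0 < m) (hr0 : 0 < r)
    (hr1 : r < 1) (hu0 : ∀ i, 0 ≤ u i) (hu : ∀ i, u (i + m) ≤ r ^ m * u i) : Summable u := by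
  set M := ∑ j ∈ Finset.range m, u j / r ^ j
  have hbound : ∀ i, u i ≤ M * r ^ i := by
    intro i
    induction i using Nat.strong_induction_on with
    | _ i ih =>
      rcases lt_or_ge i m with hi | hi
      · have hle : u i / r ^ i ≤ M := Finset.single_le_sum (f := fun j => u j / r ^ j)
          (fun j _ => div_nonneg (hu0 j) (by positivity)) (Finset.mem_range.2 hi)
        calc u i = u i / r ^ i * r ^ i := by field_simp
          _ ≤ M * r ^ i := by gcongr
      · obtain ⟨j, rfl⟩ := Nat.exists_eq_add_of_le' hi
        calc u (j + m) ≤ r ^ m * u j := hu j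
          _ ≤ r ^ m * (M * r ^ j) := by gcongr; exact ih j (by omega)
          _ = M * r ^ (j + m) := by ring
  exact .of_nonneg_of_le hu0 hbound ((summable_geometric_of_lt_one hr0.le hr1).mul_left M)

theorem HasSum.of_sum_range_eq {M : Type*} [AddCommGroup M] [TopologicalSpace M]
    [IsTopologicalAddGroup M] {f g : ℕ → M} {a : M} (hf : HasSum f a) (k : ℕ)
    (htail : ∀ n, f (n + k) = g (n + k))
    (hhead : ∑ i ∈ Finset.range k, f i = ∑ i ∈ Finset.range k, g i) : HasSum g a := by
  rw [← hasSum_nat_add_iff' k] at hf ⊢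
  simpa only [htail, hhead] using hf

theorem HasSum.matrix_mulVec {ι m n R : Type*} [Fintype n] [CommSemiring R] [TopologicalSpace R]
    [IsTopologicalSemiring R] (M : Matrix m n R) {f : ι → n → R} {x : n → R} (hf : HasSum f x) :
    HasSum (fun i => M *ᵥ f i) (M *ᵥ x) :=
  hf.map (mulVecLin M) (continuous_const.matrix_mulVec continuous_id)

theorem HasSum.matrix_mulVec_const {ι m n R : Type*} [Fintype n] [CommSemiring R]
    [TopologicalSpace R] [IsTopologicalSemiring R] {f : ι → Matrix m n R} {M : Matrix m n R}
    (hf : HasSum f M) (x : n → R) : HasSum (fun i => f i *ᵥ x) (M *ᵥ x) :=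
  hf.map (mulVec.addMonoidHomLeft x) (continuous_id.matrix_mulVec continuous_const)

theorem IsCompact.isPreconnected_of_forall_reflTransGen {X : Type*} [MetricSpace X] {s : Set X}
    (hs : IsCompact s)
    (h : ∀ ε > 0, ∀ x ∈ s, ∀ y ∈ s, ReflTransGen (fun a b => b ∈ s ∧ dist a b < ε) x y) :
    IsPreconnected s := by
  rw [isPreconnected_iff_subset_of_disjoint_closed]
  intro u v hu hv hsuv huv
  by_contra! hne
  obtain ⟨x, hxs, hxu⟩ := Set.not_subset.1 hne.1
  obtain ⟨y, hys, hyv⟩ := Set.not_subset.1 hne.2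
  have hdisj : Disjoint (s ∩ u) (s ∩ v) := by
    rw [Set.disjoint_iff_inter_eq_empty, Set.inter_inter_inter_comm, Set.inter_self, huv]
  obtain ⟨r, hr, hsep⟩ := Metric.exists_pos_forall_lt_edist (hs.inter_right hu)
    (hs.isClosed.inter hv) hdisj
  have hchain : ∀ b, ReflTransGen (fun a b => b ∈ s ∧ dist a b < r) y b → b ∈ s ∩ u := by
    intro b hb
    induction hb with
    | refl => exact ⟨hys, (hsuv hys).resolve_right hyv⟩
    | tail _ hbc ih =>
      refine ⟨hbc.1, (hsuv hbc.1).resolve_right fun hcv => ?_⟩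
      refine (hsep _ ih _ ⟨hbc.1, hcv⟩).not_gt (edist_lt_coe.2 ?_)
      rw [← NNReal.coe_lt_coe, coe_nndist]
      exact hbc.2
  exact hxu (hchain x (h r (by exact_mod_cast hr) y hys x hxs)).2

section Quadratic

variable {R : Type*} {x : R}

theorem pow_six_of_quadratic [Ring R] (hx : 3 * x ^ 2 + 3 * x + 1 = 0) : 27 * x ^ 6 = -1 := by
  have hfac : 27 * x ^ 6 + 1 =
      (3 * x ^ 2 + 3 * x + 1) * (9 * x ^ 4 - 9 * x ^ 3 + 6 * x ^ 2 - 3 * x + 1) := by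
    noncomm_ring
  rw [hx, zero_mul] at hfac
  exact eq_neg_of_add_eq_zero_left hfac

theorem one_add_pow_three_of_quadratic [Ring R] (hx : 3 * x ^ 2 + 3 * x + 1 = 0) :
    (1 + x) ^ 3 = x ^ 3 := by
  rw [show (1 + x) ^ 3 = x ^ 3 + (3 * x ^ 2 + 3 * x + 1) by noncomm_ring, hx, add_zero]

variable [NormedRing R] [NormedAlgebra ℝ R]

theorem summable_norm_pow_of_quadratic (hx : 3 * x ^ 2 + 3 * x + 1 = 0) :
    Summable fun n => ‖x ^ n‖ := by
  refine summable_of_add_le_pow_mul (m := 6) (r := 9 / 10) (by norm_num) (by norm_num)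
    (by norm_num) (fun _ => norm_nonneg _) fun i => ?_
  have h27 : (27 : ℝ) • x ^ (i + 6) = -x ^ i := by
    rw [pow_add, ofNat_smul_eq_nsmul, nsmul_eq_mul, Nat.cast_ofNat, ← mul_assoc,
      (Commute.ofNat_left 27 (x ^ i)).eq, mul_assoc, pow_six_of_quadratic hx, mul_neg_one]
  have hnorm : 27 * ‖x ^ (i + 6)‖ = ‖x ^ i‖ := by
    simpa [norm_smul] using congrArg norm h27
  nlinarith [norm_nonneg (x ^ i)]

theorem hasSum_alternating_pow_of_quadratic [CompleteSpace R]
    (hx : 3 * x ^ 2 + 3 * x + 1 = 0) :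
    HasSum (fun i : ℕ =>
        (if i + 1 = 1 then (-2 : ℝ) else if i + 1 = 2 then (-1 : ℝ)
          else (-1 : ℝ) ^ (i + 2)) • x ^ (i + 1)) 1 := by
  have hgeom : Summable fun n => (-x) ^ n := by
    refine .of_norm ((summable_norm_pow_of_quadratic hx).congr fun n => ?_)
    rw [neg_pow]
    rcases neg_one_pow_eq_or R n with h | h <;> simp [h]
  have hinv : (1 + x) * ∑' n, (-x) ^ n = 1 := by
    simpa using hgeom.one_sub_mul_tsum_pow
  have htail : x ^ 3 * ∑' n, (-x) ^ n = (1 + x) ^ 2 := by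
    rw [← one_add_pow_three_of_quadratic hx, pow_succ, mul_assoc, hinv, mul_one]
  have hhead : 1 - ∑ i ∈ Finset.range 2, (if i + 1 = 1 then (-2 : ℝ) else if i + 1 = 2 then -1
      else (-1) ^ (i + 2)) • x ^ (i + 1) = (1 + x) ^ 2 := by
    simp [Finset.sum_range_succ, two_smul]
    noncomm_ring
  rw [← hasSum_nat_add_iff' 2, hhead, ← htail]
  refine (hgeom.hasSum.mul_left (x ^ 3)).congr_fun fun n => ?_
  rw [if_neg (by omega), if_neg (by omega), show -x = (-1 : ℝ) • x by simp, smul_pow,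
    mul_smul_comm, ← pow_add, show (-1 : ℝ) ^ (n + 2 + 2) = (-1) ^ n by ring]
  ring_nf

end Quadratic

section SelfAffine

variable {A : Matrix (Fin 2) (Fin 2) ℝ} {D : Set (Fin 2 → ℝ)}

theorem Matrix.isUnit_det_of_mul_self_add (h : A * A + (3 : ℝ) • A + (3 : ℝ) • 1 = 0) :
    IsUnit A.det := by
  refine isUnit_det_of_right_inverse (B := (-3⁻¹ : ℝ) • (A + (3 : ℝ) • 1)) ?_
  rw [mul_smul_comm, mul_add, mul_smul_comm, mul_one, eq_neg_of_add_eq_zero_left h]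
  module

theorem Matrix.three_mul_inv_sq_add (h : A * A + (3 : ℝ) • A + (3 : ℝ) • 1 = 0) :
    3 * A⁻¹ ^ 2 + 3 * A⁻¹ + 1 = 0 := by
  have hBA := nonsing_inv_mul A (isUnit_det_of_mul_self_add h)
  have hBBA : A⁻¹ ^ 2 * A = A⁻¹ := by rw [sq, mul_assoc, hBA, mul_one]
  have hexp : A⁻¹ ^ 2 * (A * A + (3 : ℝ) • A + (3 : ℝ) • 1) =
      (3 : ℝ) • A⁻¹ ^ 2 + (3 : ℝ) • A⁻¹ + 1 := by
    rw [mul_add, mul_add, mul_smul_comm, mul_smul_comm, ← mul_assoc, hBBA, hBA, mul_one]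
    abel
  rw [h, mul_zero] at hexp
  simpa [ofNat_smul_eq_nsmul, nsmul_eq_mul] using hexp.symm

theorem mulVec_add_mem_selfAffine {c x : Fin 2 → ℝ} (hc : c ∈ D) (hx : x ∈ selfAffine A D) :
    A⁻¹ *ᵥ (c + x) ∈ selfAffine A D := by
  obtain ⟨d, hd, hsum⟩ := hx
  refine ⟨fun | 0 => c | n + 1 => d n, fun | 0 => hc | n + 1 => hd n, ?_⟩
  rw [← hasSum_nat_add_iff' 1]
  simpa only [Finset.sum_range_one, zero_add, pow_one, mulVec_add, add_sub_cancel_left,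
    mulVec_mulVec, ← pow_succ'] using hsum.matrix_mulVec A⁻¹

theorem HasSum.shift_digits (hA : IsUnit A.det) {e : ℕ → Fin 2 → ℝ} {x : Fin 2 → ℝ}
    (hx : HasSum (fun n => A⁻¹ ^ (n + 1) *ᵥ e n) x) :
    HasSum (fun n => A⁻¹ ^ (n + 1) *ᵥ e (n + 1)) (A *ᵥ x - e 0) := by
  have hAB : ∀ n, A * A⁻¹ ^ (n + 1 + 1) = A⁻¹ ^ (n + 1) := fun n => by
    rw [pow_succ' _ (n + 1), ← mul_assoc, mul_nonsing_inv A hA, one_mul]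
  simpa only [Finset.sum_range_one, Nat.zero_add, pow_one, mulVec_sub, mulVec_mulVec, hAB,
    mul_nonsing_inv A hA, one_mulVec] using ((hasSum_nat_add_iff' 1).2 hx).matrix_mulVec A

theorem exists_mem_selfAffine_eq_mulVec_add (hA : IsUnit A.det) {x : Fin 2 → ℝ}
    (hx : x ∈ selfAffine A D) : ∃ c ∈ D, ∃ y ∈ selfAffine A D, x = A⁻¹ *ᵥ (c + y) := by
  obtain ⟨d, hd, hsum⟩ := hx
  refine ⟨d 0, hd 0, A *ᵥ x - d 0, ⟨_, fun n => hd (n + 1), hsum.shift_digits hA⟩, ?_⟩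
  rw [add_sub_cancel, mulVec_mulVec, nonsing_inv_mul A hA, one_mulVec]

/-- `x` and `y` lie in `T` and in a common translate of `A⁻ⁿ T`. -/
def LinkedAtLevel (A : Matrix (Fin 2) (Fin 2) ℝ) (T : Set (Fin 2 → ℝ)) (n : ℕ)
    (x y : Fin 2 → ℝ) : Prop :=
  x ∈ T ∧ y ∈ T ∧ ∃ a ∈ T, ∃ b ∈ T, x - y = A⁻¹ ^ n *ᵥ (a - b)

instance (A : Matrix (Fin 2) (Fin 2) ℝ) (T : Set (Fin 2 → ℝ)) (n : ℕ) :
    Std.Symm (LinkedAtLevel A T n) where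
  symm _ _ := fun ⟨hx, hy, a, ha, b, hb, hab⟩ =>
    ⟨hy, hx, b, hb, a, ha, by rw [← neg_sub, hab, ← mulVec_neg, neg_sub]⟩

-- Hata's criterion for a star-shaped intersection graph: `c₀ - c ∈ T - T` says that the pieces
-- `A⁻¹(c + T)` and `A⁻¹(c₀ + T)` of `T` meet.
theorem reflTransGen_linkedAtLevel (hA : IsUnit A.det) {c₀ : Fin 2 → ℝ} (hc₀D : c₀ ∈ D)
    (hc₀ : ∀ c ∈ D, c₀ - c ∈ selfAffine A D - selfAffine A D) (n : ℕ) :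
    ∀ x ∈ selfAffine A D, ∀ y ∈ selfAffine A D,
      ReflTransGen (LinkedAtLevel A (selfAffine A D) n) x y := by
  induction n with
  | zero => exact fun x hx y hy => .single ⟨hx, hy, x, hx, y, hy, by simp⟩
  | succ n ih =>
    have hmap : ∀ c ∈ D, ∀ x ∈ selfAffine A D, ∀ y ∈ selfAffine A D,
        ReflTransGen (LinkedAtLevel A (selfAffine A D) (n + 1))
          (A⁻¹ *ᵥ (c + x)) (A⁻¹ *ᵥ (c + y)) := fun c hc x hx y hy =>
      ReflTransGen.lift (fun z => A⁻¹ *ᵥ (c + z)) (fun a b ⟨ha, hb, a', ha', b', hb', hab⟩ =>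
        ⟨mulVec_add_mem_selfAffine hc ha, mulVec_add_mem_selfAffine hc hb, a', ha', b', hb', by
          rw [← mulVec_sub, add_sub_add_left_eq_sub, hab, mulVec_mulVec, ← pow_succ']⟩)
        x y (ih x hx y hy)
    intro x hx y hy
    have hhub : ∀ z ∈ selfAffine A D,
        ReflTransGen (LinkedAtLevel A (selfAffine A D) (n + 1)) z (A⁻¹ *ᵥ (c₀ + y)) := by
      intro z hz
      obtain ⟨c, hc, z', hz', rfl⟩ := exists_mem_selfAffine_eq_mulVec_add hA hz
      obtain ⟨u, hu, u', hu', huu'⟩ := hc₀ c hc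
      have hmeet : c + u = c₀ + u' := by rw [add_comm]; exact sub_eq_sub_iff_add_eq_add.1 huu'
      exact (hmap c hc z' hz' u hu).trans (hmeet ▸ hmap c₀ hc₀D u' hu' y hy)
    exact (hhub x hx).trans (Std.Symm.symm _ _ (hhub y hy))

-- Matrices carry the operator norm of the sup norm, so that `‖M *ᵥ x‖ ≤ ‖M‖ * ‖x‖`.
attribute [local instance] Matrix.linftyOpNormedRing Matrix.linftyOpNormedAlgebra

theorem summable_selfAffine_digits (hA : Summable fun n => ‖A⁻¹ ^ n‖) {R : ℝ}
    {d : ℕ → Fin 2 → ℝ} (hd : ∀ n, ‖d n‖ ≤ R) : Summable fun n => A⁻¹ ^ (n + 1) *ᵥ d n := by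
  refine .of_norm_bounded (((summable_nat_add_iff 1).2 hA).mul_right R) fun n => ?_
  exact (linfty_opNorm_mulVec _ _).trans (by gcongr; exact hd n)

theorem mem_selfAffine_sub_of_hasSum (hA : Summable fun n => ‖A⁻¹ ^ n‖)
    (hD : Bornology.IsBounded D) {e : ℕ → Fin 2 → ℝ} (he : ∀ n, e n ∈ D - D) {x : Fin 2 → ℝ}
    (hx : HasSum (fun n => A⁻¹ ^ (n + 1) *ᵥ e n) x) :
    x ∈ selfAffine A D - selfAffine A D := by
  choose d hd d' hd' hdd' using he
  obtain ⟨R, hR⟩ := hD.exists_norm_le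
  have hs := summable_selfAffine_digits hA fun n => hR _ (hd n)
  have hs' := summable_selfAffine_digits hA fun n => hR _ (hd' n)
  refine ⟨_, ⟨d, hd, hs.hasSum⟩, _, ⟨d', hd', hs'.hasSum⟩, ?_⟩
  simp only [← hdd', mulVec_sub] at hx
  exact (hs.tsum_sub hs').symm.trans hx.tsum_eq

theorem isCompact_selfAffine (hA : Summable fun n => ‖A⁻¹ ^ n‖) (hD : IsCompact D) :
    IsCompact (selfAffine A D) := by
  have : CompactSpace D := isCompact_iff_compactSpace.mp hD
  obtain ⟨R, hR⟩ := hD.isBounded.exists_norm_le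
  have hrange : selfAffine A D =
      Set.range fun σ : ℕ → D => ∑' n, A⁻¹ ^ (n + 1) *ᵥ (σ n : Fin 2 → ℝ) := by
    ext x
    constructor
    · rintro ⟨d, hd, hsum⟩
      exact ⟨fun n => ⟨d n, hd n⟩, hsum.tsum_eq⟩
    · rintro ⟨σ, rfl⟩
      exact ⟨_, fun n => (σ n).2, (summable_selfAffine_digits hA fun n => hR _ (σ n).2).hasSum⟩
  rw [hrange]
  refine isCompact_range (continuous_tsum (fun n => ?_)
    (((summable_nat_add_iff 1).2 hA).mul_right R)
    fun n σ => (linfty_opNorm_mulVec _ _).trans (by gcongr; exact hR _ (σ n).2))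
  exact continuous_const.matrix_mulVec (continuous_subtype_val.comp (continuous_apply n))

theorem isConnected_selfAffine (hA : IsUnit A.det) (hsum : Summable fun n => ‖A⁻¹ ^ n‖)
    (hD : IsCompact D) {c₀ : Fin 2 → ℝ} (hc₀D : c₀ ∈ D)
    (hc₀ : ∀ c ∈ D, c₀ - c ∈ selfAffine A D - selfAffine A D) :
    IsConnected (selfAffine A D) := by
  obtain ⟨a, ha, -⟩ := hc₀ c₀ hc₀D
  refine ⟨⟨a, ha⟩, (isCompact_selfAffine hsum hD).isPreconnected_of_forall_reflTransGen
    fun ε hε x hx y hy => ?_⟩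
  obtain ⟨R, hR⟩ := (isCompact_selfAffine hsum hD).isBounded.exists_norm_le
  have hlim : Tendsto (fun n => ‖A⁻¹ ^ n‖ * (2 * R)) atTop (𝓝 0) := by
    simpa using hsum.tendsto_atTop_zero.mul_const (2 * R)
  obtain ⟨n, hn⟩ := (hlim.eventually (gt_mem_nhds hε)).exists
  refine ReflTransGen.mono (fun a b ⟨_, hb, a', ha', b', hb', hab⟩ => ⟨hb, ?_⟩)
    x y (reflTransGen_linkedAtLevel hA hc₀D hc₀ n x hx y hy)
  calc dist a b = ‖A⁻¹ ^ n *ᵥ (a' - b')‖ := by rw [dist_eq_norm, hab]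
    _ ≤ ‖A⁻¹ ^ n‖ * ‖a' - b'‖ := linfty_opNorm_mulVec _ _
    _ ≤ ‖A⁻¹ ^ n‖ * (2 * R) := by
      gcongr
      linarith [norm_sub_le a' b', hR a' ha', hR b' hb']
    _ < ε := hn

theorem Matrix.hasSum_alternating_inv_pow (h : A * A + (3 : ℝ) • A + (3 : ℝ) • 1 = 0) :
    HasSum (fun i : ℕ =>
        (if i + 1 = 1 then (-2 : ℝ) else if i + 1 = 2 then (-1 : ℝ)
          else (-1 : ℝ) ^ (i + 2)) • A⁻¹ ^ (i + 1)) 1 :=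
  hasSum_alternating_pow_of_quadratic (three_mul_inv_sq_add h)

theorem Matrix.summable_norm_inv_pow (h : A * A + (3 : ℝ) • A + (3 : ℝ) • 1 = 0) :
    Summable fun n => ‖A⁻¹ ^ n‖ :=
  summable_norm_pow_of_quadratic (three_mul_inv_sq_add h)

theorem mem_selfAffine_sub (h : A * A + (3 : ℝ) • A + (3 : ℝ) • 1 = 0) (v : Fin 2 → ℝ) :
    v ∈ selfAffine A {0, v, -(A *ᵥ v)} - selfAffine A {0, v, -(A *ᵥ v)} ∧
      A *ᵥ v + v ∈ selfAffine A {0, v, -(A *ᵥ v)} - selfAffine A {0, v, -(A *ᵥ v)} := by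
  set D : Set (Fin 2 → ℝ) := {0, v, -(A *ᵥ v)}
  have hD : Bornology.IsBounded D := (Set.toFinite D).isBounded
  have hsum := summable_norm_inv_pow h
  let e : ℕ → Fin 2 → ℝ := fun | 0 => -v | 1 => -(A *ᵥ v + v) | i + 2 => (-1 : ℝ) ^ i • v
  have he : ∀ n, e n ∈ D - D
    | 0 => ⟨0, by simp [D], v, by simp [D], zero_sub v⟩
    | 1 => ⟨-(A *ᵥ v), by simp [D], v, by simp [D], (neg_add' _ _).symm⟩
    | i + 2 => by
      rcases neg_one_pow_eq_or ℝ i with hi | hi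
      · exact ⟨v, by simp [D], 0, by simp [D], by simp [e, hi]⟩
      · exact ⟨0, by simp [D], v, by simp [D], by simp [e, hi]⟩
  have hBBA : A⁻¹ ^ 2 * A = A⁻¹ := by
    rw [sq, mul_assoc, nonsing_inv_mul A (isUnit_det_of_mul_self_add h), mul_one]
  have hexp : HasSum (fun n => A⁻¹ ^ (n + 1) *ᵥ e n) v := by
    have hId := (hasSum_alternating_inv_pow h).matrix_mulVec_const v
    rw [one_mulVec] at hId
    refine hId.of_sum_range_eq 2 (fun n => ?_) ?_
    · rw [if_neg (by omega), if_neg (by omega), smul_mulVec, mulVec_smul,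
        show (-1 : ℝ) ^ (n + 2 + 2) = (-1) ^ n by ring]
    · have h2 : A⁻¹ ^ 2 *ᵥ (A *ᵥ v) = A⁻¹ *ᵥ v := by rw [mulVec_mulVec, hBBA]
      simp only [Finset.sum_range_succ, Finset.sum_range_zero, zero_add, Nat.reduceAdd, pow_one,
        ↓reduceIte, OfNat.ofNat_ne_one, e, smul_mulVec, mulVec_neg, mulVec_add, h2]
      module
  refine ⟨mem_selfAffine_sub_of_hasSum hsum hD he hexp, ?_⟩
  rw [← sub_neg_eq_add (A *ᵥ v) v]
  exact mem_selfAffine_sub_of_hasSum hsum hD (fun n => he (n + 1))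
    (hexp.shift_digits (isUnit_det_of_mul_self_add h))

end SelfAffine

theorem stmt14_general (A : Matrix (Fin 2) (Fin 2) ℝ)
    (h : A * A + (3 : ℝ) • A + (3 : ℝ) • (1 : Matrix (Fin 2) (Fin 2) ℝ) = 0)
    (v : Fin 2 → ℝ)
    (D : Set (Fin 2 → ℝ)) (hD : D = {0, v, -(A *ᵥ v)})
    (T : Set (Fin 2 → ℝ)) (hT : T = selfAffine A D) :
    HasSum (fun i : ℕ =>
        (if i + 1 = 1 then (-2 : ℝ) else if i + 1 = 2 then (-1 : ℝ)
          else (-1 : ℝ) ^ (i + 2)) • A⁻¹ ^ (i + 1))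
      (1 : Matrix (Fin 2) (Fin 2) ℝ) ∧
    v ∈ T - T ∧ (A *ᵥ v + v) ∈ T - T ∧ IsConnected T := by
  subst hD hT
  obtain ⟨hv, hAv⟩ := mem_selfAffine_sub h v
  refine ⟨Matrix.hasSum_alternating_inv_pow h, hv, hAv,
    isConnected_selfAffine (Matrix.isUnit_det_of_mul_self_add h) (Matrix.summable_norm_inv_pow h)
      (Set.toFinite _).isCompact (c₀ := v) (by simp) ?_⟩
  rintro c (rfl | rfl | rfl)
  · rwa [sub_zero]
  · obtain ⟨a, ha, -⟩ := hv
    exact ⟨a, ha, a, ha, (sub_self a).trans (sub_self _).symm⟩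
  · rwa [sub_neg_eq_add, add_comm]

theorem stmt14 (A : Matrix (Fin 2) (Fin 2) ℝ)
    (h : A * A + (3 : ℝ) • A + (3 : ℝ) • (1 : Matrix (Fin 2) (Fin 2) ℝ) = 0)
    (v : Fin 2 → ℝ) (hv : LinearIndependent ℝ ![v, A *ᵥ v])
    (D : Set (Fin 2 → ℝ)) (hD : D = {0, v, -(A *ᵥ v)})
    (T : Set (Fin 2 → ℝ)) (hT : T = selfAffine A D) :
    HasSum (fun i : ℕ =>
        (if i + 1 = 1 then (-2 : ℝ) else if i + 1 = 2 then (-1 : ℝ)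
          else (-1 : ℝ) ^ (i + 2)) • A⁻¹ ^ (i + 1))
      (1 : Matrix (Fin 2) (Fin 2) ℝ) ∧
    v ∈ T - T ∧ (A *ᵥ v + v) ∈ T - T ∧ IsConnected T :=
  stmt14_general A h v D hD T hT
end

section
/- Let A be a 2×2 matrix with A² + A − 3I = 0 and v with {v, Av} linearly independent. Then Av + v = ∑_{i=1}^{∞} ε_i A^{−i}(Av) where ε_1 = −1 and ε_i = 1 for i ≥ 2. Consequently for 𝒟 = {0, v, −Av}, the set T(A,𝒟) is connected. -/
/-!
Code the points of `T(A, 𝒟)` by digit sequences, `π ω = ∑ A⁻¹ ^ (n + 1) d (ω n)` with digits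
`d = (0, v, -Av)`, so that `π (a ω) = A⁻¹ (d a + π ω)`. Since `3 A⁻² = A⁻¹ + 1`, every power is
`A⁻ⁿ = pₙ A⁻¹ + qₙ` with `(pₙ, qₙ)` shrinking geometrically, so `π` is well defined and continuous.

As `A` fixes no nonzero vector, `π (2 2 2 …) = -(3v + Av)` is the only fixed point of
`x ↦ A⁻¹ (x - Av)`, which gives `π (2 0 0 …) = -v` and `π (0 2 2 …) = -(Av + 2v)`. Their difference
is the series of the first claim, and the same values show that the pieces `π [0]`, `π [1]` meet
(at `0`) and so do `π [1]`, `π [2]`.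

Connectedness is then Hata's criterion: if the graph of meeting first-level pieces is connected,
any two digit sequences are joined by a chain whose consecutive terms share a prefix of length `n`
or have the same image. A closed-and-open set of sequences is a union of cylinders of one fixed
length, so the preimage of one half of a separation of `T` would contain the whole chain.
-/

open Matrix

open Set Relation PiNat

section SeqCons

variable {ι : Type*}

def seqCons (a : ι) (ω : ℕ → ι) : ℕ → ι
  | 0 => a
  | n + 1 => ω n

theorem seqCons_head_tail (ω : ℕ → ι) : seqCons (ω 0) (fun n => ω (n + 1)) = ω :=
  funext (Nat.rec rfl fun _ _ => rfl)

theorem seqCons_const (a : ι) : seqCons a (fun _ => a) = fun _ => a :=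
  funext (Nat.rec rfl fun _ _ => rfl)

end SeqCons

theorem PiNat.exists_forall_cylinder_subset_of_isClopen {ι : Type*} [TopologicalSpace ι]
    [DiscreteTopology ι] [Finite ι] {P : Set (ℕ → ι)} (hP : IsClopen P) :
    ∃ n, ∀ α ∈ P, cylinder α n ⊆ P := by
  have hloc : ∀ α ∈ P, ∃ n, cylinder α n ⊆ P := fun α hα => by
    obtain ⟨_, ⟨β, n, rfl⟩, hαβ, hsub⟩ :=
      (isTopologicalBasis_cylinders _).exists_subset_of_mem_open hα hP.isOpen
    exact ⟨n, mem_cylinder_iff_eq.1 hαβ ▸ hsub⟩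
  choose! N hN using hloc
  obtain ⟨t, htP, hcover⟩ := hP.isClosed.isCompact.elim_nhds_subcover (fun α => cylinder α (N α))
    fun α _ => (isOpen_cylinder _ _ _).mem_nhds (self_mem_cylinder _ _)
  refine ⟨t.sup N, fun α hα β hβ => ?_⟩
  obtain ⟨γ, hγt, hαγ⟩ := mem_iUnion₂.1 (hcover hα)
  refine hN γ (htP γ hγt) ?_
  rw [← mem_cylinder_iff_eq.1 hαγ]
  exact cylinder_anti α (Finset.le_sup hγt) hβ

section Hata

variable {ι X : Type*}

-- The edge relation of Hata's intersection graph of the first-level pieces `π [i]`.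
def PiecesMeet (π : (ℕ → ι) → X) (i j : ι) : Prop :=
  ∃ α β, π (seqCons i α) = π (seqCons j β)

variable {π : (ℕ → ι) → X} {f : ι → X → X}

theorem reflTransGen_mem_cylinder_or_eq (hcons : ∀ a ω, π (seqCons a ω) = f a (π ω))
    (hG : ∀ i j, ReflTransGen (PiecesMeet π) i j)
    (n : ℕ) (α β : ℕ → ι) :
    ReflTransGen (fun α β => β ∈ cylinder α n ∨ π α = π β) α β := by
  induction n generalizing α β with
  | zero => exact .single (.inl (by simp [cylinder]))
  | succ n ih =>
    have hlift (a : ι) (α β : ℕ → ι) : ReflTransGen (fun α β => β ∈ cylinder α (n + 1) ∨ π α = π β)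
        (seqCons a α) (seqCons a β) := by
      refine (ih α β).lift _ fun γ δ hγδ => ?_
      rcases hγδ with hγδ | hγδ
      · refine .inl fun k hk => ?_
        cases k with
        | zero => rfl
        | succ k => exact hγδ k (by omega)
      · exact .inr (by rw [hcons, hcons, hγδ])
    have hchain : ∀ a b, ReflTransGen (PiecesMeet π) a b →
        ∀ α β, ReflTransGen (fun α β => β ∈ cylinder α (n + 1) ∨ π α = π β)
          (seqCons a α) (seqCons b β) := by
      intro a b hab
      induction hab with
      | refl => exact hlift a
      | tail _ hbc ih' =>
        obtain ⟨γ, δ, hγδ⟩ := hbc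
        exact fun α β => ((ih' α γ).tail (.inr hγδ)).trans (hlift _ δ β)
    rw [← seqCons_head_tail α, ← seqCons_head_tail β]
    exact hchain _ _ (hG _ _) _ _

theorem isConnected_range_of_forall_reflTransGen [TopologicalSpace ι] [DiscreteTopology ι]
    [Finite ι] [Nonempty ι] [TopologicalSpace X] (hπ : Continuous π)
    (hcons : ∀ a ω, π (seqCons a ω) = f a (π ω))
    (hG : ∀ i j, ReflTransGen (PiecesMeet π) i j) :
    IsConnected (range π) := by
  refine ⟨range_nonempty π, isPreconnected_closed_iff.2 ?_⟩
  rintro t t' ht ht' hcover ⟨_, ⟨α, rfl⟩, hα⟩ ⟨_, ⟨β, rfl⟩, hβ⟩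
  by_contra hdisj
  have hcompl : π ⁻¹' t = (π ⁻¹' t')ᶜ := by
    ext γ
    have hγ := hcover (mem_range_self γ)
    have := fun h h' => hdisj ⟨π γ, mem_range_self γ, h, h'⟩
    simp only [mem_preimage, mem_compl_iff, mem_union] at hγ ⊢
    tauto
  obtain ⟨n, hn⟩ := PiNat.exists_forall_cylinder_subset_of_isClopen
    ⟨ht.preimage hπ, hcompl ▸ (ht'.preimage hπ).isOpen_compl⟩
  have hαt : ∀ γ, ReflTransGen (fun α β => β ∈ cylinder α n ∨ π α = π β) α γ → π γ ∈ t := by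
    intro γ hγ
    induction hγ with
    | refl => exact hα
    | tail _ hγδ ih => exact hγδ.elim (fun h => hn _ ih h) (· ▸ ih)
  exact hdisj ⟨π β, mem_range_self β, hαt β (reflTransGen_mem_cylinder_or_eq hcons hG n α β), hβ⟩

end Hata

section Decay

variable {m : Type*} [Fintype m] [DecidableEq m] {B : Matrix m m ℝ}

noncomputable def powCoeff : ℕ → ℝ × ℝ
  | 0 => (0, 1)
  | n + 1 => ((powCoeff n).1 / 3 + (powCoeff n).2, (powCoeff n).1 / 3)

theorem pow_eq_powCoeff (hB : B * B = (3 : ℝ)⁻¹ • (B + 1)) (n : ℕ) :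
    B ^ n = (powCoeff n).1 • B + (powCoeff n).2 • (1 : Matrix m m ℝ) := by
  induction n with
  | zero => simp [powCoeff]
  | succ n ih =>
    rw [pow_succ, ih, add_mul, smul_mul_assoc, hB, smul_mul_assoc, one_mul, powCoeff]
    module

-- The recursion contracts the weighted norm `|p| + 3/2 |q|` by the factor `5/6`.
theorem abs_powCoeff_le (n : ℕ) :
    |(powCoeff n).1| + 3 / 2 * |(powCoeff n).2| ≤ 3 / 2 * (5 / 6) ^ n := by
  induction n with
  | zero => norm_num [powCoeff]
  | succ n ih =>
    have h3 : |(powCoeff n).1 / 3| = |(powCoeff n).1| / 3 := by simp [abs_div]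
    have := h3 ▸ abs_add_le ((powCoeff n).1 / 3) (powCoeff n).2
    simp only [powCoeff, h3, pow_succ]
    nlinarith [abs_nonneg (powCoeff n).2]

theorem exists_norm_pow_mulVec_le (hB : B * B = (3 : ℝ)⁻¹ • (B + 1)) :
    ∃ C, 0 ≤ C ∧ ∀ n y, ‖B ^ n *ᵥ y‖ ≤ C * (5 / 6) ^ n * ‖y‖ := by
  set L := LinearMap.toContinuousLinearMap (mulVecLin B)
  refine ⟨3 / 2 * (‖L‖ + 1), by positivity, fun n y => ?_⟩
  have hpq := abs_powCoeff_le n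
  set p := (powCoeff n).1
  set q := (powCoeff n).2
  have hL : 0 ≤ ‖L‖ := norm_nonneg L
  calc ‖B ^ n *ᵥ y‖ = ‖p • L y + q • y‖ := by
        rw [pow_eq_powCoeff hB, add_mulVec, smul_mulVec, smul_mulVec, one_mulVec]; rfl
    _ ≤ |p| * (‖L‖ * ‖y‖) + |q| * ‖y‖ := by
        refine (norm_add_le _ _).trans ?_
        rw [norm_smul, norm_smul, Real.norm_eq_abs, Real.norm_eq_abs]
        gcongr
        exact L.le_opNorm y
    _ ≤ (|p| + 3 / 2 * |q|) * (‖L‖ + 1) * ‖y‖ := by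
        nlinarith [abs_nonneg p, abs_nonneg q, norm_nonneg y, mul_nonneg (abs_nonneg q) hL]
    _ ≤ 3 / 2 * (5 / 6) ^ n * (‖L‖ + 1) * ‖y‖ := by gcongr
    _ = 3 / 2 * (‖L‖ + 1) * (5 / 6) ^ n * ‖y‖ := by ring

end Decay

section Coding

variable {m ι : Type*} [Fintype m] [DecidableEq m]

noncomputable def coding (B : Matrix m m ℝ) (d : ι → m → ℝ) (ω : ℕ → ι) : m → ℝ :=
  ∑' n, B ^ (n + 1) *ᵥ d (ω n)

variable {B : Matrix m m ℝ} {d : ι → m → ℝ} {u : ℕ → ℝ} (hu : Summable u)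
  (hB : ∀ n i, ‖B ^ (n + 1) *ᵥ d i‖ ≤ u n)
include hu hB

theorem hasSum_coding (ω : ℕ → ι) :
    HasSum (fun n => B ^ (n + 1) *ᵥ d (ω n)) (coding B d ω) :=
  (Summable.of_norm_bounded hu fun n => hB n (ω n)).hasSum

theorem continuous_coding [TopologicalSpace ι] [DiscreteTopology ι] : Continuous (coding B d) := by
  refine continuous_tsum (fun n => ?_) hu fun n ω => hB n (ω n)
  exact (continuous_of_discreteTopology (f := fun i => B ^ (n + 1) *ᵥ d i)).comp
    (continuous_apply n)

theorem coding_cons (a : ι) (ω : ℕ → ι) :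
    coding B d (seqCons a ω) = B *ᵥ (d a + coding B d ω) := by
  have htail := (LinearMap.toContinuousLinearMap (mulVecLin B)).hasSum (hasSum_coding hu hB ω)
  simp only [LinearMap.coe_toContinuousLinearMap', mulVecLin_apply, mulVec_mulVec,
    ← pow_succ'] at htail
  have := (HasSum.zero_add (f := fun n => B ^ (n + 1) *ᵥ d (seqCons a ω n)) htail).tsum_eq
  rw [zero_add, pow_one] at this
  rwa [mulVec_add]

end Coding

theorem selfAffine_range_eq {ι : Type*} {A : Matrix (Fin 2) (Fin 2) ℝ} {d : ι → Fin 2 → ℝ}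
    {u : ℕ → ℝ} (hu : Summable u) (hB : ∀ n i, ‖A⁻¹ ^ (n + 1) *ᵥ d i‖ ≤ u n) :
    selfAffine A (range d) = range (coding A⁻¹ d) := by
  ext x
  constructor
  · rintro ⟨e, he, hsum⟩
    choose ω hω using he
    obtain rfl : d ∘ ω = e := funext hω
    exact ⟨ω, hsum.tsum_eq⟩
  · rintro ⟨ω, rfl⟩
    exact ⟨d ∘ ω, fun n => mem_range_self _, hasSum_coding hu hB ω⟩


section Quadratic

variable {m : Type*} [Fintype m] [DecidableEq m] {A : Matrix m m ℝ}
  (hA : A * A + A - (3 : ℝ) • (1 : Matrix m m ℝ) = 0)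
include hA

theorem mul_smul_add_one_eq_one : A * ((3 : ℝ)⁻¹ • (A + 1)) = 1 := by
  rw [Matrix.mul_smul, mul_add, mul_one, sub_eq_zero.1 hA, smul_smul, inv_mul_cancel₀ three_ne_zero,
    one_smul]

theorem inv_eq_smul_add_one : A⁻¹ = (3 : ℝ)⁻¹ • (A + 1) :=
  inv_eq_right_inv (mul_smul_add_one_eq_one hA)

theorem mul_inv_cancel_of_quadratic : A * A⁻¹ = 1 := by
  rw [inv_eq_smul_add_one hA]
  exact mul_smul_add_one_eq_one hA

theorem inv_mul_cancel_of_quadratic : A⁻¹ * A = 1 :=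
  mul_eq_one_comm.1 (mul_inv_cancel_of_quadratic hA)

theorem inv_mul_inv_eq : A⁻¹ * A⁻¹ = (3 : ℝ)⁻¹ • (A⁻¹ + 1) := by
  have hsq : A * A = (3 : ℝ) • 1 - A := by rw [← sub_eq_zero, ← hA]; abel
  rw [inv_eq_smul_add_one hA, smul_mul_smul, add_mul, mul_add, mul_add, hsq, mul_one, one_mul,
    one_mul]
  module

theorem eq_zero_of_inv_mulVec_eq_self {z : m → ℝ} (hz : A⁻¹ *ᵥ z = z) : z = 0 := by
  -- on a fixed vector of `A` the relation reads `z + z - 3 z = 0`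
  have hAz : A *ᵥ z = z := by
    conv_lhs => rw [← hz]
    rw [mulVec_mulVec, mul_inv_cancel_of_quadratic hA, one_mulVec]
  have := congrArg (· *ᵥ z) hA
  simp only [sub_mulVec, add_mulVec, ← mulVec_mulVec, hAz, smul_mulVec, one_mulVec,
    zero_mulVec] at this
  linear_combination (norm := module) -this

theorem inv_mulVec_mulVec (v : m → ℝ) : A⁻¹ *ᵥ (A *ᵥ v) = v := by
  rw [mulVec_mulVec, inv_mul_cancel_of_quadratic hA, one_mulVec]

theorem inv_mulVec_eq (v : m → ℝ) : A⁻¹ *ᵥ v = (3 : ℝ)⁻¹ • (A *ᵥ v + v) := by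
  rw [inv_eq_smul_add_one hA, smul_mulVec, add_mulVec, one_mulVec]

theorem exists_summable_norm_inv_pow_mulVec_le {ι : Type*} [Finite ι] (d : ι → m → ℝ) :
    ∃ u : ℕ → ℝ, Summable u ∧ ∀ n i, ‖A⁻¹ ^ (n + 1) *ᵥ d i‖ ≤ u n := by
  obtain ⟨C, hC, hpow⟩ := exists_norm_pow_mulVec_le (inv_mul_inv_eq hA)
  obtain ⟨M, hM⟩ := Finite.bddAbove_range fun i => ‖d i‖
  refine ⟨fun n => C * (5 / 6) ^ (n + 1) * M, ?_, fun n i => (hpow _ _).trans ?_⟩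
  · exact (((summable_nat_add_iff 1).2
      (summable_geometric_of_lt_one (by norm_num) (by norm_num))).mul_left C).mul_right M
  · exact mul_le_mul_of_nonneg_left (hM ⟨i, rfl⟩) (by positivity)

end Quadratic

section Digits

variable {m : Type*} [Fintype m] (A : Matrix m m ℝ) (v : m → ℝ)

def digits : Fin 3 → m → ℝ := ![0, v, -(A *ᵥ v)]

theorem range_digits : range (digits A v) = {0, v, -(A *ᵥ v)} := by
  simp only [digits, range_cons, range_empty, union_empty, singleton_union]

variable [DecidableEq m]

theorem coding_const_zero : coding A⁻¹ (digits A v) (fun _ => 0) = 0 := by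
  simp [coding, digits]

variable {A v} (hA : A * A + A - (3 : ℝ) • (1 : Matrix m m ℝ) = 0) {u : ℕ → ℝ} (hu : Summable u)
  (hB : ∀ n i, ‖A⁻¹ ^ (n + 1) *ᵥ digits A v i‖ ≤ u n)
include hA hu hB

theorem coding_two_const_zero :
    coding A⁻¹ (digits A v) (seqCons 2 fun _ => 0) = -v := by
  rw [coding_cons hu hB, coding_const_zero, add_zero]
  simp [digits, mulVec_neg, inv_mulVec_mulVec hA]

theorem coding_const_two :
    coding A⁻¹ (digits A v) (fun _ => 2) = -((3 : ℝ) • v + A *ᵥ v) := by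
  set z := coding A⁻¹ (digits A v) fun _ => 2
  have hfix := coding_cons hu hB 2 fun _ => 2
  rw [seqCons_const] at hfix
  change z = A⁻¹ *ᵥ (-(A *ᵥ v) + z) at hfix
  rw [mulVec_add, mulVec_neg, inv_mulVec_mulVec hA] at hfix
  rw [← sub_eq_zero]
  refine eq_zero_of_inv_mulVec_eq_self hA ?_
  rw [mulVec_sub, mulVec_neg, mulVec_add, mulVec_smul, inv_mulVec_mulVec hA, inv_mulVec_eq hA v]
  linear_combination (norm := module) -hfix

theorem coding_zero_const_two :
    coding A⁻¹ (digits A v) (seqCons 0 fun _ => 2) = -(A *ᵥ v + (2 : ℝ) • v) := by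
  rw [coding_cons hu hB, coding_const_two hA hu hB]
  simp only [digits, cons_val_zero, zero_add, mulVec_neg, mulVec_add, mulVec_smul,
    inv_mulVec_mulVec hA, inv_mulVec_eq hA v]
  module

theorem hasSum_ite_smul_inv_pow_mulVec :
    HasSum (fun i : ℕ => (if i = 0 then (-1 : ℝ) else 1) • (A⁻¹ ^ (i + 1) *ᵥ (A *ᵥ v)))
      (A *ᵥ v + v) := by
  have hdiff := (hasSum_coding hu hB (seqCons 2 fun _ => 0)).sub
    (hasSum_coding hu hB (seqCons 0 fun _ => 2))
  have hterms : (fun i => A⁻¹ ^ (i + 1) *ᵥ digits A v (seqCons 2 (fun _ => 0) i) -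
      A⁻¹ ^ (i + 1) *ᵥ digits A v (seqCons 0 (fun _ => 2) i)) =
      fun i : ℕ => (if i = 0 then (-1 : ℝ) else 1) • (A⁻¹ ^ (i + 1) *ᵥ (A *ᵥ v)) := by
    funext i
    cases i <;> simp [digits, seqCons, mulVec_neg]
  rwa [hterms, coding_two_const_zero hA hu hB, coding_zero_const_two hA hu hB,
    show -v - -(A *ᵥ v + (2 : ℝ) • v) = A *ᵥ v + v by module] at hdiff

theorem reflTransGen_digits (i j : Fin 3) :
    ReflTransGen (PiecesMeet (coding A⁻¹ (digits A v))) i j := by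
  set R := PiecesMeet (coding A⁻¹ (digits A v))
  have : Std.Symm R := ⟨fun _ _ ⟨α, β, h⟩ => ⟨β, α, h.symm⟩⟩
  have h01 : R 0 1 := ⟨fun _ => 0, seqCons 2 fun _ => 0, by
    rw [coding_cons hu hB 0, coding_cons hu hB 1, coding_const_zero, coding_two_const_zero hA hu hB]
    simp [digits]⟩
  have h12 : R 1 2 := ⟨seqCons 0 fun _ => 2, seqCons 2 fun _ => 0, by
    rw [coding_cons hu hB 1, coding_cons hu hB 2, coding_zero_const_two hA hu hB,
      coding_two_const_zero hA hu hB]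
    congr 1
    simp only [digits, cons_val_zero, cons_val_one, cons_val]
    module⟩
  have h0 : ∀ k, ReflTransGen R 0 k := by
    intro k
    fin_cases k
    exacts [.refl, .single h01, .tail (.single h01) h12]
  exact (Std.Symm.symm _ _ (h0 i)).trans (h0 j)

end Digits

theorem stmt15_general (A : Matrix (Fin 2) (Fin 2) ℝ)
    (h : A * A + A - (3 : ℝ) • (1 : Matrix (Fin 2) (Fin 2) ℝ) = 0)
    (v : Fin 2 → ℝ)
    (D : Set (Fin 2 → ℝ)) (hD : D = {0, v, -(A *ᵥ v)}) :
    HasSum (fun i : ℕ =>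
        (if i = 0 then (-1 : ℝ) else 1) • (A⁻¹ ^ (i + 1) *ᵥ (A *ᵥ v)))
      (A *ᵥ v + v) ∧
    IsConnected (selfAffine A D) := by
  obtain ⟨u, hu, hB⟩ := exists_summable_norm_inv_pow_mulVec_le h (digits A v)
  refine ⟨hasSum_ite_smul_inv_pow_mulVec h hu hB, ?_⟩
  rw [hD, ← range_digits, selfAffine_range_eq hu hB]
  exact isConnected_range_of_forall_reflTransGen (f := fun a x => A⁻¹ *ᵥ (digits A v a + x))
    (continuous_coding hu hB) (coding_cons hu hB) (reflTransGen_digits h hu hB)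

theorem stmt15 (A : Matrix (Fin 2) (Fin 2) ℝ)
    (h : A * A + A - (3 : ℝ) • (1 : Matrix (Fin 2) (Fin 2) ℝ) = 0)
    (v : Fin 2 → ℝ) (hv : LinearIndependent ℝ ![v, A *ᵥ v])
    (D : Set (Fin 2 → ℝ)) (hD : D = {0, v, -(A *ᵥ v)}) :
    HasSum (fun i : ℕ =>
        (if i = 0 then (-1 : ℝ) else 1) • (A⁻¹ ^ (i + 1) *ᵥ (A *ᵥ v)))
      (A *ᵥ v + v) ∧
    IsConnected (selfAffine A D) :=
  stmt15_general A h v D hD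
end
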